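/- Let p, h > 0, c = cosh(p h), s = sinh(p h), θ = (s - p h)/(2(p c h - s)), and ω = p(1 - c)h/(p c h - s). Then ω < 0, so ω ≠ 0. -/
import Mathlib

lemma sinh_lt_mul_cosh {x : ℝ} (hx : 0 < x) : Real.sinh x < x * Real.cosh x := by
  have h : StrictMonoOn (fun y : ℝ => y * Real.cosh y - Real.sinh y) (Set.Ici 0) := by
    apply strictMonoOn_of_deriv_pos (convex_Ici 0)
    · fun_prop
    · intro y hy
      rw [interior_Ici] at hy
      have : HasDerivAt (fun y : ℝ => y * Real.cosh y - Real.sinh y)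
          (1 * Real.cosh y + y * Real.sinh y - Real.cosh y) y := by
        exact ((hasDerivAt_id y).mul (Real.hasDerivAt_cosh y)).sub (Real.hasDerivAt_sinh y)
      rw [this.deriv]
      have : 0 < Real.sinh y := Real.sinh_pos_iff.mpr hy
      have hym : y ∈ Set.Ioi (0:ℝ) := hy
      nlinarith [Set.mem_Ioi.mp hym]
  have := h (Set.self_mem_Ici) (Set.mem_Ici.mpr hx.le) hx
  simpa using this

theorem omega_neg (p h : ℝ) (hp : 0 < p) (hh : 0 < h) :
    p * (1 - Real.cosh (p * h)) * h /
        (p * Real.cosh (p * h) * h - Real.sinh (p * h)) < 0 ∧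
    p * (1 - Real.cosh (p * h)) * h /
        (p * Real.cosh (p * h) * h - Real.sinh (p * h)) ≠ 0 := by
  have hph : 0 < p * h := mul_pos hp hh
  have h1 : 1 < Real.cosh (p * h) := Real.one_lt_cosh.mpr (ne_of_gt hph)
  have hden : 0 < p * Real.cosh (p * h) * h - Real.sinh (p * h) := by
    have := sinh_lt_mul_cosh hph
    nlinarith
  have hnum : p * (1 - Real.cosh (p * h)) * h < 0 := by nlinarith
  have := div_neg_of_neg_of_pos hnum hden
  exact ⟨this, ne_of_lt this⟩
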